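/- arXiv:2401.06147 — 15 statements merged into one kernel-verified Lean document; each statement's English description precedes it below -/
import Mathlib

section
/- Let f : S → ℂ satisfy f(x σ(y) z₀) = f(x) f(y) for all x, y ∈ S. Then f(z₀) ≠ 0 if and only if f is not identically zero. -/
/-! If `f z₀ = 0`, evaluating `f` at `x σ(w) σ(z₀) z₀` in two ways gives `f x * f (w z₀) = 0`;
choosing `w = x σ(x)`, for which `f (w z₀) = f x * f x`, forces `f x ^ 3 = 0`. -/

section

variable {S M₀ : Type*} [Semigroup S] [MulZeroClass M₀] {z₀ : S} {σ : S → S} {f : S → M₀}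

theorem mul_apply_mul_right_eq_zero_of_apply_eq_zero
    (hσmul : ∀ x y : S, σ (x * y) = σ x * σ y) (hf : ∀ x y : S, f (x * σ y * z₀) = f x * f y)
    (hz : f z₀ = 0) (x w : S) : f x * f (w * z₀) = 0 :=
  calc f x * f (w * z₀) = f (x * σ (w * z₀) * z₀) := (hf x _).symm
    _ = f (x * σ w * σ z₀ * z₀) := by simp only [hσmul, mul_assoc]
    _ = 0 := by rw [hf, hz, mul_zero]

theorem eq_zero_of_apply_eq_zero [NoZeroDivisors M₀]
    (hσmul : ∀ x y : S, σ (x * y) = σ x * σ y) (hf : ∀ x y : S, f (x * σ y * z₀) = f x * f y)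
    (hz : f z₀ = 0) : f = 0 := by
  funext x
  have h := mul_apply_mul_right_eq_zero_of_apply_eq_zero hσmul hf hz x (x * σ x)
  rw [hf] at h
  simpa only [mul_eq_zero, or_self, Pi.zero_apply] using h

end

theorem kannappan_exp_fz0_ne_zero_iff_general
    {S : Type*} [Semigroup S] (z₀ : S) (σ : S → S)
    (hσmul : ∀ x y : S, σ (x * y) = σ x * σ y)
    (f : S → ℂ)
    (hf : ∀ x y : S, f (x * σ y * z₀) = f x * f y) :
    f z₀ ≠ 0 ↔ f ≠ 0 :=
  ⟨fun hz hf0 => hz (congrFun hf0 z₀), mt (eq_zero_of_apply_eq_zero hσmul hf)⟩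

/-- If `f : S → ℂ` satisfies `f (x σ(y) z₀) = f x * f y` for all `x y`,
then `f z₀ ≠ 0` iff `f` is not identically zero. -/
theorem kannappan_exp_fz0_ne_zero_iff
    {S : Type*} [Semigroup S] (z₀ : S) (σ : S → S)
    (hσmul : ∀ x y : S, σ (x * y) = σ x * σ y)
    (hσinv : ∀ x : S, σ (σ x) = x)
    (f : S → ℂ)
    (hf : ∀ x y : S, f (x * σ y * z₀) = f x * f y) :
    f z₀ ≠ 0 ↔ f ≠ 0 :=
  kannappan_exp_fz0_ne_zero_iff_general z₀ σ hσmul f hf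
end

section
/- Let f : S → ℂ satisfy f(x σ(y) z₀) = f(x) f(y) for all x, y ∈ S. Then there exists a multiplicative function χ : S → ℂ with χ∘σ = χ such that f = χ(z₀) · χ. -/
/-!
Applying the equation with `y = z₀` and with `y = σ v * z₀` gives
`f (x * v) * f z₀ = f x * f (σ v * z₀)`, so for `f ≠ 0` (which forces `f z₀ ≠ 0`) the function
`χ v = f (σ v * z₀) / f z₀` satisfies `f (x * v) = f x * χ v`. Expanding `f (a * x * y)` in two
ways makes `χ` multiplicative, the equation itself then reads `f = χ z₀ • (χ ∘ σ)`, and expanding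
`f (a * v)` through both descriptions of `f` gives `χ ∘ σ = χ`.
-/

section RightTranslation

variable {S M : Type*} [Semigroup S] [CommGroupWithZero M]

theorem map_mul_of_apply_mul_eq {f χ : S → M} (h : ∀ x v, f (x * v) = f x * χ v) {a : S}
    (ha : f a ≠ 0) (x y : S) : χ (x * y) = χ x * χ y := by
  apply mul_left_cancel₀ ha
  calc f a * χ (x * y) = f (a * x * y) := by rw [mul_assoc, h]
    _ = f a * (χ x * χ y) := by rw [h, h, mul_assoc]

theorem eq_of_apply_mul_eq {f χ ψ : S → M} {c : M} (h : ∀ x v, f (x * v) = f x * χ v)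
    (hψ : ∀ x y, ψ (x * y) = ψ x * ψ y) (hf : ∀ x, f x = c * ψ x) {a : S} (ha : f a ≠ 0)
    (v : S) : χ v = ψ v := by
  apply mul_left_cancel₀ ha
  calc f a * χ v = f (a * v) := (h a v).symm
    _ = f a * ψ v := by rw [hf, hψ, hf, mul_assoc]

end RightTranslation

namespace Kannappan

variable {S M : Type*} [Semigroup S] [CommGroupWithZero M] {σ : S → S} {z₀ : S} {f : S → M}

theorem apply_mul_mul_apply_base (hσmul : ∀ x y, σ (x * y) = σ x * σ y)
    (hσinv : ∀ x, σ (σ x) = x) (hf : ∀ x y, f (x * σ y * z₀) = f x * f y) (x v : S) :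
    f (x * v) * f z₀ = f x * f (σ v * z₀) :=
  calc f (x * v) * f z₀ = f (x * v * σ z₀ * z₀) := (hf _ _).symm
    _ = f (x * σ (σ v * z₀) * z₀) := by rw [hσmul, hσinv, mul_assoc x]
    _ = f x * f (σ v * z₀) := hf _ _

theorem apply_base_ne_zero (hσmul : ∀ x y, σ (x * y) = σ x * σ y)
    (hσinv : ∀ x, σ (σ x) = x) (hf : ∀ x y, f (x * σ y * z₀) = f x * f y) {a : S}
    (ha : f a ≠ 0) : f z₀ ≠ 0 := by
  intro h0
  have hvanish : ∀ v, f (σ v * z₀) = 0 := fun v => by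
    have h := apply_mul_mul_apply_base hσmul hσinv hf a v
    rw [h0, mul_zero] at h
    exact (mul_eq_zero.1 h.symm).resolve_left ha
  have h := hvanish (σ (a * σ a))
  rw [hσinv, hf] at h
  exact ha (mul_self_eq_zero.1 h)

noncomputable def character (σ : S → S) (z₀ : S) (f : S → M) (v : S) : M :=
  f (σ v * z₀) / f z₀

theorem apply_mul_eq_mul_character (hσmul : ∀ x y, σ (x * y) = σ x * σ y)
    (hσinv : ∀ x, σ (σ x) = x) (hf : ∀ x y, f (x * σ y * z₀) = f x * f y)
    (h0 : f z₀ ≠ 0) (x v : S) : f (x * v) = f x * character σ z₀ f v := by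
  rw [character, mul_div_assoc', eq_div_iff h0, apply_mul_mul_apply_base hσmul hσinv hf]

theorem apply_eq_mul_apply_comp {χ : S → M} (hf : ∀ x y, f (x * σ y * z₀) = f x * f y)
    (h : ∀ x v, f (x * v) = f x * χ v) {a : S} (ha : f a ≠ 0) (y : S) :
    f y = χ z₀ * χ (σ y) := by
  apply mul_left_cancel₀ ha
  rw [← hf, h, h, mul_assoc, mul_comm (χ (σ y))]

end Kannappan

/-- If `f : S → ℂ` satisfies `f (x σ(y) z₀) = f x * f y` for all `x y`,
then `f = χ(z₀) • χ` for some multiplicative `χ` with `χ ∘ σ = χ`. -/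
theorem kannappan_exp_solution
    {S : Type*} [Semigroup S] (z₀ : S) (σ : S → S)
    (hσmul : ∀ x y : S, σ (x * y) = σ x * σ y)
    (hσinv : ∀ x : S, σ (σ x) = x)
    (f : S → ℂ)
    (hf : ∀ x y : S, f (x * σ y * z₀) = f x * f y) :
    ∃ χ : S → ℂ, (∀ x y : S, χ (x * y) = χ x * χ y) ∧
      (∀ x : S, χ (σ x) = χ x) ∧ (∀ x : S, f x = χ z₀ * χ x) := by
  by_cases hzero : ∀ x, f x = 0
  · exact ⟨fun _ => 0, by simp, by simp, by simpa using hzero⟩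
  obtain ⟨a, ha⟩ := not_forall.1 hzero
  set χ := Kannappan.character σ z₀ f
  have htrans : ∀ x v, f (x * v) = f x * χ v :=
    Kannappan.apply_mul_eq_mul_character hσmul hσinv hf
      (Kannappan.apply_base_ne_zero hσmul hσinv hf ha)
  have hχmul := map_mul_of_apply_mul_eq htrans ha
  have hfσ := Kannappan.apply_eq_mul_apply_comp hf htrans ha
  have hχσ : ∀ v, χ (σ v) = χ v := fun v =>
    (eq_of_apply_mul_eq htrans (fun x y => by rw [hσmul, hχmul]) hfσ ha v).symm
  exact ⟨χ, hχmul, hχσ, fun x => by rw [hfσ, hχσ]⟩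
end

section
/- Let f : S → ℂ be a nonzero function satisfying f(x σ(y) z₀) = f(x) f(y) for all x, y ∈ S. Then f(σ(z₀) z₀) ≠ 0 and, setting β := f(z₀) / f(σ(z₀) z₀), one has f(x σ(y)) = β f(x) f(y) for all x, y ∈ S. -/
/-!
Substituting `x ↦ y * z₀`, `y ↦ z₀` and `x ↦ y`, `y ↦ σ z₀ * z₀` into the functional equation
computes `f (y * z₀ * σ z₀ * z₀)` in two ways, giving `f (y * z₀) f z₀ = f y f (σ z₀ * z₀)`.
With `y = x * σ y'` this is the claimed identity once `f (σ z₀ * z₀) ≠ 0`, and that follows from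
the same identity at `y = x₀ * σ x₀` for any `x₀` with `f x₀ ≠ 0`, provided `f z₀ ≠ 0`. For the
latter, `c = x₀ * σ x₀ * z₀` has `f c = f x₀ ^ 2 ≠ 0`, and `c * σ c * z₀ = (c * σ x₀ * x₀) * σ z₀ * z₀`
shows `f c ^ 2 = f (c * σ x₀ * x₀) * f z₀`.
-/

section

variable {S M : Type*} [Semigroup S] {σ : S → S} {z₀ : S} {f : S → M}

theorem apply_mul_mul_apply_eq [Mul M] (hσmul : ∀ x y, σ (x * y) = σ x * σ y)
    (hσinv : ∀ x, σ (σ x) = x) (hf : ∀ x y, f (x * σ y * z₀) = f x * f y) (y : S) :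
    f (y * z₀) * f z₀ = f y * f (σ z₀ * z₀) := by
  rw [← hf, ← hf]
  congr 1
  simp only [hσmul, hσinv, mul_assoc]

variable [MulZeroClass M] [NoZeroDivisors M]

theorem apply_base_ne_zero (hσmul : ∀ x y, σ (x * y) = σ x * σ y) (hσinv : ∀ x, σ (σ x) = x)
    (hf : ∀ x y, f (x * σ y * z₀) = f x * f y) {x : S} (hx : f x ≠ 0) : f z₀ ≠ 0 := by
  set c := x * σ x * z₀
  have hc : f c ≠ 0 := by simpa only [c, hf] using mul_ne_zero hx hx
  have hcc : f c * f c = f (c * σ x * x) * f z₀ := by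
    rw [← hf, ← hf]
    congr 1
    simp only [c, hσmul, hσinv, mul_assoc]
  exact right_ne_zero_of_mul (hcc ▸ mul_ne_zero hc hc)

theorem apply_sigma_base_mul_base_ne_zero (hσmul : ∀ x y, σ (x * y) = σ x * σ y)
    (hσinv : ∀ x, σ (σ x) = x) (hf : ∀ x y, f (x * σ y * z₀) = f x * f y) {x : S}
    (hx : f x ≠ 0) : f (σ z₀ * z₀) ≠ 0 := by
  have h := apply_mul_mul_apply_eq hσmul hσinv hf (x * σ x)
  rw [hf] at h
  exact right_ne_zero_of_mul
    (h ▸ mul_ne_zero (mul_ne_zero hx hx) (apply_base_ne_zero hσmul hσinv hf hx))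

end

theorem apply_mul_sigma_eq {S K : Type*} [Semigroup S] [Field K] {σ : S → S} {z₀ : S}
    {f : S → K} (hσmul : ∀ x y, σ (x * y) = σ x * σ y) (hσinv : ∀ x, σ (σ x) = x)
    (hf : ∀ x y, f (x * σ y * z₀) = f x * f y) (hβ : f (σ z₀ * z₀) ≠ 0) (x y : S) :
    f (x * σ y) = f z₀ / f (σ z₀ * z₀) * f x * f y := by
  have h := apply_mul_mul_apply_eq hσmul hσinv hf (x * σ y)
  rw [hf] at h
  field_simp
  linear_combination -h

/-- If `f ≠ 0` satisfies `f (x σ(y) z₀) = f x * f y`, then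
`f (σ(z₀) z₀) ≠ 0` and, with `β := f z₀ / f (σ(z₀) z₀)`, one has
`f (x σ(y)) = β * f x * f y` for all `x y`. -/
theorem kannappan_exp_sine_relation
    {S : Type*} [Semigroup S] (z₀ : S) (σ : S → S)
    (hσmul : ∀ x y : S, σ (x * y) = σ x * σ y)
    (hσinv : ∀ x : S, σ (σ x) = x)
    (f : S → ℂ) (hf0 : f ≠ 0)
    (hf : ∀ x y : S, f (x * σ y * z₀) = f x * f y) :
    f (σ z₀ * z₀) ≠ 0 ∧
      ∀ x y : S, f (x * σ y) = f z₀ / f (σ z₀ * z₀) * f x * f y := by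
  obtain ⟨x₀, hx₀⟩ := Function.ne_iff.mp hf0
  have hβ := apply_sigma_base_mul_base_ne_zero hσmul hσinv hf hx₀
  exact ⟨hβ, apply_mul_sigma_eq hσmul hσinv hf hβ⟩
end

section
/- Let χ : S → ℂ be a multiplicative function. If p ∈ P_χ, then up ∈ P_χ, pv ∈ P_χ, and upv ∈ P_χ for all u, v ∈ S \ I_χ. -/
variable {S : Type*} [Semigroup S]

/-- The null space `I_χ` of a multiplicative function `χ`. -/
def nullSpace (χ : S → ℂ) : Set S := {x | χ x = 0}

/-- The set `I_χ² = {x y | x, y ∈ I_χ}`. -/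
def nullSpaceSq (χ : S → ℂ) : Set S :=
  {z | ∃ x ∈ nullSpace χ, ∃ y ∈ nullSpace χ, z = x * y}

/-- The set `P_χ` from Ebanks's partition of `I_χ`. -/
def Pchi (χ : S → ℂ) : Set S :=
  {p | p ∈ nullSpace χ \ nullSpaceSq χ ∧
    ∀ u v : S, u ∉ nullSpace χ → v ∉ nullSpace χ →
      u * p ∈ nullSpace χ \ nullSpaceSq χ ∧
      p * v ∈ nullSpace χ \ nullSpaceSq χ ∧
      u * p * v ∈ nullSpace χ \ nullSpaceSq χ}

/-! Since `χ` is multiplicative, `S \ I_χ` is closed under multiplication, so the two-sided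
multiples of `u * p` (or `p * v`) by elements of `S \ I_χ` are two-sided multiples of `p` by such
elements. It therefore suffices to treat one-sided multiples: `u * p * v = (u * p) * v`. -/

lemma mul_notMem_nullSpace {χ : S → ℂ} (hχ : ∀ x y : S, χ (x * y) = χ x * χ y) {a b : S}
    (ha : a ∉ nullSpace χ) (hb : b ∉ nullSpace χ) : a * b ∉ nullSpace χ :=
  fun hab => mul_ne_zero ha hb ((hχ a b).symm.trans hab)

lemma mul_left_mem_Pchi {χ : S → ℂ} (hχ : ∀ x y : S, χ (x * y) = χ x * χ y) {p u : S}
    (hp : p ∈ Pchi χ) (hu : u ∉ nullSpace χ) : u * p ∈ Pchi χ := by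
  obtain ⟨-, hP⟩ := hp
  refine ⟨(hP u u hu hu).1, fun u' v' hu' hv' => ⟨?_, (hP u v' hu hv').2.2, ?_⟩⟩
  · simpa only [mul_assoc] using (hP (u' * u) v' (mul_notMem_nullSpace hχ hu' hu) hv').1
  · simpa only [mul_assoc] using (hP (u' * u) v' (mul_notMem_nullSpace hχ hu' hu) hv').2.2

lemma mul_right_mem_Pchi {χ : S → ℂ} (hχ : ∀ x y : S, χ (x * y) = χ x * χ y) {p v : S}
    (hp : p ∈ Pchi χ) (hv : v ∉ nullSpace χ) : p * v ∈ Pchi χ := by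
  obtain ⟨-, hP⟩ := hp
  refine ⟨(hP v v hv hv).2.1, fun u' v' hu' hv' => ⟨?_, ?_, ?_⟩⟩
  · simpa only [mul_assoc] using (hP u' v hu' hv).2.2
  · simpa only [mul_assoc] using (hP v (v * v') hv (mul_notMem_nullSpace hχ hv hv')).2.1
  · simpa only [mul_assoc] using (hP u' (v * v') hu' (mul_notMem_nullSpace hχ hv hv')).2.2

/-- If `p ∈ P_χ` then `u*p, p*v, u*p*v ∈ P_χ` for all `u, v ∈ S \ I_χ`. -/
theorem Pchi_mul_mem
    (χ : S → ℂ) (hχ : ∀ x y : S, χ (x * y) = χ x * χ y)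
    (p : S) (hp : p ∈ Pchi χ)
    (u v : S) (hu : u ∉ nullSpace χ) (hv : v ∉ nullSpace χ) :
    u * p ∈ Pchi χ ∧ p * v ∈ Pchi χ ∧ u * p * v ∈ Pchi χ :=
  ⟨mul_left_mem_Pchi hχ hp hu, mul_right_mem_Pchi hχ hp hv,
    mul_right_mem_Pchi hχ (mul_left_mem_Pchi hχ hp hu) hv⟩
end

section
/- Let f, g : S → ℂ be a solution of the Kannappan-sine subtraction law f(x σ(y) z₀) = f(x) g(y) − f(y) g(x) for all x, y ∈ S, such that f and g are linearly independent. Then f(z₀) = 0. -/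
/-!
Expanding `f (x σ(y) z₀ σ(w) z₀)` by the law at `(x σ(y) z₀, w)` and at `(x, y σ(z₀) w)`, and
comparing the coefficients of the independent functions `f` and `g`, shows that `z₀` may be moved
inside the law: `f(y σ(z₀) w) = f(y) g(w) - f(w) g(y)`. From this, `f` and `g` agree at `σ(w) z₀`
and `z₀ w`, and then `f(z₀) g = g(z₀) f` on `S z₀`. Evaluated at `x σ(y) z₀`, this forces
`f(z₀) (g(z₀) f - f(z₀) g) = 0`, so `f(z₀)² = 0` by independence. To avoid dividing by `f(z₀)`,
the intermediate identities are stated multiplied by `f(z₀)`.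
-/

theorem LinearIndependent.eq_and_eq_of_forall_mul_add_mul_eq {α : Type*} {f g : α → ℂ}
    (hind : LinearIndependent ℂ ![f, g]) {a b c d : ℂ}
    (h : ∀ x, a * f x + b * g x = c * f x + d * g x) : a = c ∧ b = d :=
  hind.eq_of_pair (funext h)

section KannappanSineSub

variable {S : Type*} [Semigroup S] {σ : S → S} {z₀ : S} {f g : S → ℂ}

def kannappanPhi (σ : S → S) (z₀ : S) (g : S → ℂ) (y : S) : ℂ :=
  g y * g z₀ - g (y * σ z₀ * z₀)

theorem f_mul_g_mul_sigma_mul_z₀ (hσmul : ∀ x y, σ (x * y) = σ x * σ y)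
    (hσinv : Function.Involutive σ) (hfg : ∀ x y, f (x * σ y * z₀) = f x * g y - f y * g x)
    (x y w : S) :
    f w * g (x * σ y * z₀) =
      f x * (g y * g w - g (y * σ z₀ * w)) - g x * (f y * g w - f (y * σ z₀ * w)) := by
  have hassoc : x * σ (y * σ z₀ * w) * z₀ = x * σ y * z₀ * σ w * z₀ := by
    simp only [hσmul, hσinv z₀, mul_assoc]
  have hleft := hfg (x * σ y * z₀) w
  have hright := hfg x (y * σ z₀ * w)
  rw [hassoc] at hright
  linear_combination hleft - hright + g w * hfg x y

theorem f_z₀_mul_g_mul_sigma_mul_z₀ (hσmul : ∀ x y, σ (x * y) = σ x * σ y)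
    (hσinv : Function.Involutive σ) (hfg : ∀ x y, f (x * σ y * z₀) = f x * g y - f y * g x)
    (x y : S) :
    f z₀ * g (x * σ y * z₀) = f x * kannappanPhi σ z₀ g y - f z₀ * g x * g y := by
  unfold kannappanPhi
  linear_combination f_mul_g_mul_sigma_mul_z₀ hσmul hσinv hfg x y z₀ + g x * hfg y z₀

theorem f_z₀_mul_kannappanPhi (hσmul : ∀ x y, σ (x * y) = σ x * σ y)
    (hσinv : Function.Involutive σ) (hfg : ∀ x y, f (x * σ y * z₀) = f x * g y - f y * g x)
    (y : S) :
    f z₀ * kannappanPhi σ z₀ g y = 2 * g z₀ * f z₀ * g y - kannappanPhi σ z₀ g z₀ * f y := by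
  have h := f_z₀_mul_g_mul_sigma_mul_z₀ hσmul hσinv hfg y z₀
  unfold kannappanPhi at h ⊢
  linear_combination -h

theorem f_z₀_mul_mul_sigma_z₀_mul (hσmul : ∀ x y, σ (x * y) = σ x * σ y)
    (hσinv : Function.Involutive σ) (hfg : ∀ x y, f (x * σ y * z₀) = f x * g y - f y * g x)
    (hind : LinearIndependent ℂ ![f, g]) (y w : S) :
    f z₀ * (g y * g w - g (y * σ z₀ * w)) = f w * kannappanPhi σ z₀ g y ∧
      f z₀ * f (y * σ z₀ * w) = f z₀ * (f y * g w - f w * g y) := by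
  have h := hind.eq_and_eq_of_forall_mul_add_mul_eq (a := f z₀ * (g y * g w - g (y * σ z₀ * w)))
    (b := f z₀ * (f (y * σ z₀ * w) - f y * g w + f w * g y))
    (c := f w * kannappanPhi σ z₀ g y) (d := 0) fun x => by
      linear_combination f w * f_z₀_mul_g_mul_sigma_mul_z₀ hσmul hσinv hfg x y -
        f z₀ * f_mul_g_mul_sigma_mul_z₀ hσmul hσinv hfg x y w
  exact ⟨h.1, by linear_combination h.2⟩

theorem f_z₀_mul_sigma_mul_z₀ (hσmul : ∀ x y, σ (x * y) = σ x * σ y)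
    (hσinv : Function.Involutive σ) (hfg : ∀ x y, f (x * σ y * z₀) = f x * g y - f y * g x)
    (hind : LinearIndependent ℂ ![f, g]) (w : S) :
    f z₀ * f (σ w * z₀) = f z₀ * f (z₀ * w) ∧ f z₀ * g (σ w * z₀) = f z₀ * g (z₀ * w) := by
  have h := hind.eq_and_eq_of_forall_mul_add_mul_eq (a := f z₀ * g (σ w * z₀))
    (b := -(f z₀ * f (σ w * z₀))) (c := f z₀ * g (z₀ * w)) (d := -(f z₀ * f (z₀ * w)))
    fun y => by
      have hassoc : y * σ (z₀ * w) * z₀ = y * σ z₀ * (σ w * z₀) := by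
        simp only [hσmul, mul_assoc]
      have hlaw := hfg y (z₀ * w)
      rw [hassoc] at hlaw
      linear_combination f z₀ * hlaw - (f_z₀_mul_mul_sigma_z₀_mul hσmul hσinv hfg hind y _).2
  exact ⟨by linear_combination -h.2, h.1⟩

theorem f_z₀_mul_z₀_mul (hσmul : ∀ x y, σ (x * y) = σ x * σ y)
    (hσinv : Function.Involutive σ) (hfg : ∀ x y, f (x * σ y * z₀) = f x * g y - f y * g x)
    (hind : LinearIndependent ℂ ![f, g]) (x : S) :
    f z₀ * (f z₀ * g (z₀ * x)) = f z₀ * (g z₀ * f (z₀ * x)) := by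
  obtain ⟨hf, hg⟩ := f_z₀_mul_sigma_mul_z₀ hσmul hσinv hfg hind x
  have h := hind.eq_and_eq_of_forall_mul_add_mul_eq
    (a := f (z₀ * x) * kannappanPhi σ z₀ g z₀)
    (b := 2 * f z₀ * (f z₀ * g (z₀ * x) - g z₀ * f (z₀ * x)))
    (c := f z₀ * kannappanPhi σ z₀ g (z₀ * x)) (d := 0) fun y => by
      have hassoc : y * σ (z₀ * x) * z₀ = y * σ z₀ * (σ x * z₀) := by
        simp only [hσmul, mul_assoc]
      have hA := f_z₀_mul_g_mul_sigma_mul_z₀ hσmul hσinv hfg y (z₀ * x)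
      rw [hassoc] at hA
      linear_combination f (z₀ * x) * f_z₀_mul_kannappanPhi hσmul hσinv hfg y +
        kannappanPhi σ z₀ g y * hf - g y * f z₀ * hg + f z₀ * hA +
        f z₀ * (f_z₀_mul_mul_sigma_z₀_mul hσmul hσinv hfg hind y (σ x * z₀)).1
  linear_combination h.2 / 2

theorem f_z₀_mul_mul_z₀ (hσmul : ∀ x y, σ (x * y) = σ x * σ y)
    (hσinv : Function.Involutive σ) (hfg : ∀ x y, f (x * σ y * z₀) = f x * g y - f y * g x)
    (hind : LinearIndependent ℂ ![f, g]) (u : S) :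
    f z₀ * (f z₀ * g (u * z₀)) = f z₀ * (g z₀ * f (u * z₀)) := by
  obtain ⟨hf, hg⟩ := f_z₀_mul_sigma_mul_z₀ hσmul hσinv hfg hind (σ u)
  rw [hσinv u] at hf hg
  linear_combination f z₀ * hg - g z₀ * hf + f_z₀_mul_z₀_mul hσmul hσinv hfg hind (σ u)

theorem f_z₀_mul_g_z₀_mul (hσmul : ∀ x y, σ (x * y) = σ x * σ y)
    (hσinv : Function.Involutive σ) (hfg : ∀ x y, f (x * σ y * z₀) = f x * g y - f y * g x)
    (hind : LinearIndependent ℂ ![f, g]) (y : S) :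
    f z₀ * (g z₀ * f y) = f z₀ * (f z₀ * g y) := by
  have h := hind.eq_and_eq_of_forall_mul_add_mul_eq (a := f z₀ * kannappanPhi σ z₀ g y)
    (b := -(f z₀ * f z₀ * g y)) (c := f z₀ * g z₀ * g y) (d := -(f z₀ * g z₀ * f y))
    fun x => by
      linear_combination f_z₀_mul_mul_z₀ hσmul hσinv hfg hind (x * σ y) -
        f z₀ * f_z₀_mul_g_mul_sigma_mul_z₀ hσmul hσinv hfg x y + f z₀ * g z₀ * hfg x y
  linear_combination h.2

end KannappanSineSub

/-- If `f, g` solve the Kannappan-sine subtraction law and are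
linearly independent, then `f z₀ = 0`. -/
theorem kannappan_sine_sub_f_z0_eq_zero
    {S : Type*} [Semigroup S] (z₀ : S) (σ : S → S)
    (hσmul : ∀ x y : S, σ (x * y) = σ x * σ y)
    (hσinv : ∀ x : S, σ (σ x) = x)
    (f g : S → ℂ)
    (hfg : ∀ x y : S, f (x * σ y * z₀) = f x * g y - f y * g x)
    (hind : ∀ a b : ℂ, (∀ x : S, a * f x + b * g x = 0) → a = 0 ∧ b = 0) :
    f z₀ = 0 := by
  have hli : LinearIndependent ℂ ![f, g] :=
    LinearIndependent.pair_iff.mpr fun a b hab => hind a b fun x => congrFun hab x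
  have h := hind (f z₀ * g z₀) (-(f z₀ * f z₀)) fun y => by
    linear_combination f_z₀_mul_g_z₀_mul hσmul hσinv hfg hli y
  exact mul_self_eq_zero.mp (neg_eq_zero.mp h.2)
end

section
/- Let f, g : S → ℂ be a solution of the Kannappan-sine subtraction law f(x σ(y) z₀) = f(x) g(y) − f(y) g(x) for all x, y ∈ S, such that f and g are linearly independent. Then for all x, y ∈ S: g(σ(z₀) z₀) f(x σ(y)) = g(z₀) [f(x) g(y) − f(y) g(x)] + f(σ(z₀) z₀) g(x σ(y)). -/
/-!
Evaluating `f` at `x σ(y) z₀ σ(w) z₀` in the two ways the law allows, and separating the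
coefficients of `f(x)` and `g(x)` by linear independence, expresses `f(z₀) f(y σ(z₀) w)` and
`f(z₀) g(y σ(z₀) w)` through `f, g` at `y` and `w`. If `f(z₀) ≠ 0`, comparing the two bracketings
of `x σ(z₀) w σ(z₀) v` then gives `f(w) k(x) + f(x) k(w) = 2 f(z₀) g(x) g(w)` with
`k(y) = g(y) g(z₀) − g(y σ(z₀) z₀)`, which linear independence rules out. So `f(z₀) = 0`, and the
identity is the law evaluated at `x σ(y) z₀ σ(z₀) z₀` in two ways.
-/

namespace KannappanSine

variable {S K : Type*} [Field K] {f g : S → K}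

theorem exists_ne_zero_of_indep
    (hind : ∀ a b : K, (∀ x : S, a * f x + b * g x = 0) → a = 0 ∧ b = 0) : ∃ v, f v ≠ 0 := by
  by_contra! h
  exact one_ne_zero (hind 1 0 fun x => by simp [h x]).1

theorem eq_zero_of_symm_identity [NeZero (2 : K)] {k : S → K} {c : K}
    (hind : ∀ a b : K, (∀ x : S, a * f x + b * g x = 0) → a = 0 ∧ b = 0)
    (h : ∀ x w, f w * k x + f x * k w = 2 * c * g x * g w) : c = 0 := by
  obtain ⟨v, hv⟩ := exists_ne_zero_of_indep hind
  -- `f v • k` lies in the span of `f` and `g`; substituting it back leaves a form in `f, g` alone.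
  have hk : ∀ x, f v * k x = 2 * c * g v * g x - k v * f x := fun x => by
    linear_combination h x v
  have hform : ∀ w, 2 * c * g v * f w - 2 * c * f v * g w = 0 := fun w =>
    (hind (2 * c * g v * g w - 2 * k v * f w) (2 * c * g v * f w - 2 * c * f v * g w)
      fun x => by linear_combination f v * h x w - f w * hk x - f x * hk w).2
  have h2cf : 2 * c * f v = 0 :=
    neg_eq_zero.mp (hind (2 * c * g v) (-(2 * c * f v)) fun w => by linear_combination hform w).2
  simpa [two_ne_zero, hv] using h2cf

variable [Semigroup S]

def SineSubLaw (z₀ : S) (σ : S → S) (f g : S → K) : Prop :=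
  ∀ x y, f (x * σ y * z₀) = f x * g y - f y * g x

namespace SineSubLaw

variable {z₀ : S} {σ : S →ₙ* S}

-- Both sides are `f (a z₀ σ(w) z₀)`.
theorem reassoc_outer (hσ : Function.Involutive σ) (h : SineSubLaw z₀ σ f g) (a w : S) :
    f (a * z₀) * g w - f w * g (a * z₀) = f a * g (σ z₀ * w) - f (σ z₀ * w) * g a := by
  rw [← h (a * z₀) w, ← h a (σ z₀ * w), map_mul, hσ, mul_assoc a]

-- Both sides are `f (x σ(y) z₀ σ(w) z₀)`.
theorem reassoc_inner (hσ : Function.Involutive σ) (h : SineSubLaw z₀ σ f g) (x y w : S) :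
    (f x * g y - f y * g x) * g w - f w * g (x * σ y * z₀) =
      f x * g (y * σ z₀ * w) - f (y * σ z₀ * w) * g x := by
  rw [← h x y, ← h (x * σ y * z₀) w, ← h x (y * σ z₀ * w), map_mul, map_mul, hσ]
  simp only [mul_assoc]

theorem f_z₀_mul_g_mul_σ_mul_z₀ (hσ : Function.Involutive σ) (h : SineSubLaw z₀ σ f g)
    (x y : S) :
    f z₀ * g (x * σ y * z₀) =
      f x * (g y * g z₀ - g (y * σ z₀ * z₀)) - f z₀ * g x * g y := by
  linear_combination -reassoc_inner hσ h x y z₀ + g x * h y z₀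

theorem f_z₀_mul_mul_σ_z₀_mul (hσ : Function.Involutive σ) (h : SineSubLaw z₀ σ f g)
    (hind : ∀ a b : K, (∀ x : S, a * f x + b * g x = 0) → a = 0 ∧ b = 0) (y w : S) :
    f z₀ * g (y * σ z₀ * w) = f z₀ * g y * g w - f w * (g y * g z₀ - g (y * σ z₀ * z₀)) ∧
      f z₀ * f (y * σ z₀ * w) = f z₀ * (f y * g w - f w * g y) := by
  obtain ⟨hg, hf⟩ := hind
    (f z₀ * g y * g w - f w * (g y * g z₀ - g (y * σ z₀ * z₀)) - f z₀ * g (y * σ z₀ * w))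
    (f z₀ * (f (y * σ z₀ * w) - f y * g w + f w * g y)) fun x => by
      linear_combination f z₀ * reassoc_inner hσ h x y w + f w * f_z₀_mul_g_mul_σ_mul_z₀ hσ h x y
  exact ⟨by linear_combination -hg, by linear_combination hf⟩

theorem symm_identity_of_f_z₀_ne_zero (hσ : Function.Involutive σ) (h : SineSubLaw z₀ σ f g)
    (hind : ∀ a b : K, (∀ x : S, a * f x + b * g x = 0) → a = 0 ∧ b = 0) (hz : f z₀ ≠ 0)
    (x w : S) :
    f w * (g x * g z₀ - g (x * σ z₀ * z₀)) + f x * (g w * g z₀ - g (w * σ z₀ * z₀)) =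
      2 * f z₀ * g x * g w := by
  obtain ⟨v, hv⟩ := exists_ne_zero_of_indep hind
  have hmid := f_z₀_mul_mul_σ_z₀_mul hσ h hind
  -- the two bracketings of `x σ(z₀) w σ(z₀) v`
  have e₁ := (hmid (x * σ z₀ * w) v).2
  have e₂ := (hmid x (w * σ z₀ * v)).2
  simp only [← mul_assoc] at e₂
  have hprod : f z₀ * f v * (f w * (g x * g z₀ - g (x * σ z₀ * z₀)) +
      f x * (g w * g z₀ - g (w * σ z₀ * z₀)) - 2 * f z₀ * g x * g w) = 0 := by
    linear_combination -(f z₀) * e₁ + f z₀ * e₂ - f z₀ * g v * (hmid x w).2 -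
      f z₀ * g x * (hmid w v).2 + f z₀ * f v * (hmid x w).1 + f z₀ * f x * (hmid w v).1
  exact sub_eq_zero.mp ((mul_eq_zero.mp hprod).resolve_left (mul_ne_zero hz hv))

theorem f_z₀_eq_zero [NeZero (2 : K)] (hσ : Function.Involutive σ) (h : SineSubLaw z₀ σ f g)
    (hind : ∀ a b : K, (∀ x : S, a * f x + b * g x = 0) → a = 0 ∧ b = 0) : f z₀ = 0 := by
  by_contra hz
  exact hz (eq_zero_of_symm_identity hind (symm_identity_of_f_z₀_ne_zero hσ h hind hz))

end SineSubLaw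

end KannappanSine

/-- If `f, g` solve the Kannappan-sine subtraction law and are
linearly independent, then
`g(σ(z₀)z₀) f(xσ(y)) = g(z₀)[f(x)g(y) − f(y)g(x)] + f(σ(z₀)z₀) g(xσ(y))`. -/
theorem kannappan_sine_sub_key_identity
    {S : Type*} [Semigroup S] (z₀ : S) (σ : S → S)
    (hσmul : ∀ x y : S, σ (x * y) = σ x * σ y)
    (hσinv : ∀ x : S, σ (σ x) = x)
    (f g : S → ℂ)
    (hfg : ∀ x y : S, f (x * σ y * z₀) = f x * g y - f y * g x)
    (hind : ∀ a b : ℂ, (∀ x : S, a * f x + b * g x = 0) → a = 0 ∧ b = 0) :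
    ∀ x y : S,
      g (σ z₀ * z₀) * f (x * σ y) =
        g z₀ * (f x * g y - f y * g x) + f (σ z₀ * z₀) * g (x * σ y) := by
  let τ : S →ₙ* S := ⟨σ, hσmul⟩
  have hlaw : KannappanSine.SineSubLaw z₀ τ f g := hfg
  have hτ : Function.Involutive τ := hσinv
  have hz : f z₀ = 0 := hlaw.f_z₀_eq_zero hτ hind
  intro x y
  have e := hlaw.reassoc_outer hτ (x * σ y) z₀
  rw [hfg x y, hz] at e
  linear_combination -e
end

section
/- Let f, g : S → ℂ be a solution of the Kannappan-sine subtraction law f(x σ(y) z₀) = f(x) g(y) − f(y) g(x) for all x, y ∈ S, such that f and g are linearly independent. Then g(z₀) ≠ 0. -/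
/-!
Assume `g z₀ = 0`. Evaluating `f (v σ(x) y σ(w) z₀)` in two ways gives a four-point identity,
and independence of `f` and `g` lets one read off both coefficients of any relation
`f v * A - B * g v = 0`. If also `f z₀ = 0`, this forces `f x g y = f y g x`, so `f = 0`.
If `f z₀ ≠ 0`, it shows that for the associative product `x ∘ y = x σ(z₀) y` the function `g`
is multiplicative and `f` satisfies the sine subtraction law `f (x ∘ y) = f x g y - f y g x`;
computing `f (x ∘ x ∘ u)` with both bracketings then gives `2 f(u) g(x)² = 0`, so `g = 0`.
-/

lemma LinearIndependent.pair_coeffs_eq_zero {S R : Type*} [Ring R] {f g : S → R}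
    (h : LinearIndependent R ![f, g]) {a b : R} (hab : ∀ x, a * f x + b * g x = 0) :
    a = 0 ∧ b = 0 :=
  LinearIndependent.pair_iff.mp h a b (funext fun x => by simpa using hab x)

lemma sine_sub_mul_sq_eq_zero {S R : Type*} [Semigroup S] [CommRing R] [IsDomain R] [CharZero R]
    {f g : S → R} (c : S) (hg : ∀ x y, g (x * c * y) = g x * g y)
    (hf : ∀ x y, f (x * c * y) = f x * g y - f y * g x) (x u : S) :
    f u * g x ^ 2 = 0 := by
  have h_left : f (x * c * x * c * u) = -(f u * g x ^ 2) := by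
    rw [hf, hf, hg]
    ring
  have h_right : f (x * c * (x * c * u)) = f u * g x ^ 2 := by
    rw [hf, hf, hg]
    ring
  rw [show x * c * x * c * u = x * c * (x * c * u) by simp only [mul_assoc]] at h_left
  have h2 : (2 : R) * (f u * g x ^ 2) = 0 := by linear_combination h_left - h_right
  simpa using h2

section Kannappan

variable {S R : Type*} [Semigroup S] [CommRing R] {σ : S → S} {z₀ : S} {f g : S → R}

lemma kannappan_four_point (hσmul : ∀ x y : S, σ (x * y) = σ x * σ y)
    (hσinv : ∀ x : S, σ (σ x) = x)
    (hfg : ∀ x y : S, f (x * σ y * z₀) = f x * g y - f y * g x) (v x y w : S) :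
    f (v * σ x * y) * g w - f w * g (v * σ x * y)
      = f v * g (x * σ y * w) - f (x * σ y * w) * g v := by
  rw [← hfg, ← hfg]
  simp only [hσmul, hσinv, mul_assoc]

variable [IsDomain R]

lemma kannappan_false_of_apply_z₀_eq_zero (hσmul : ∀ x y : S, σ (x * y) = σ x * σ y)
    (hσinv : ∀ x : S, σ (σ x) = x)
    (hfg : ∀ x y : S, f (x * σ y * z₀) = f x * g y - f y * g x)
    (hli : LinearIndependent R ![f, g]) (hgz : g z₀ = 0) (hfz : f z₀ = 0) : False := by
  have hf_mul : ∀ x y, f (x * σ y * z₀) = 0 := fun x y =>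
    neg_eq_zero.mp (hli.pair_coeffs_eq_zero (a := g (x * σ y * z₀)) fun v => by
      have h := kannappan_four_point hσmul hσinv hfg v x y z₀
      rw [hgz, hfz] at h
      linear_combination -h).2
  have hf : f = 0 := funext fun y =>
    neg_eq_zero.mp (hli.pair_coeffs_eq_zero (a := g y) fun x => by
      linear_combination (hfg x y).symm.trans (hf_mul x y)).2
  exact hli.ne_zero 0 hf

lemma kannappan_g_mul_sigma_mul_z₀ [CharZero R] (hσmul : ∀ x y : S, σ (x * y) = σ x * σ y)
    (hσinv : ∀ x : S, σ (σ x) = x)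
    (hfg : ∀ x y : S, f (x * σ y * z₀) = f x * g y - f y * g x)
    (hgz : g z₀ = 0) (hfz : f z₀ ≠ 0) (v x : S) :
    g (v * σ x * z₀) = -(g x * g v) := by
  have h_expand : ∀ v x,
      -(f z₀ * g (v * σ x * z₀)) = f v * g (x * σ z₀ * z₀) + f z₀ * g x * g v := by
    intro v x
    have h := kannappan_four_point hσmul hσinv hfg v x z₀ z₀
    rw [hgz, hfg x z₀, hgz] at h
    linear_combination h
  have hg_z₀_mul : g (z₀ * σ z₀ * z₀) = 0 := by
    have h := h_expand z₀ z₀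
    rw [hgz] at h
    have h2 : (2 * f z₀) * g (z₀ * σ z₀ * z₀) = 0 := by linear_combination -h
    simpa [hfz] using h2
  have hg_mul_sigma_z₀ : ∀ v, g (v * σ z₀ * z₀) = 0 := fun v => by
    have h := h_expand v z₀
    rw [hg_z₀_mul, hgz] at h
    simpa [hfz] using h
  have h := h_expand v x
  rw [hg_mul_sigma_z₀ x] at h
  have h2 : f z₀ * (g (v * σ x * z₀) + g x * g v) = 0 := by linear_combination -h
  linear_combination (mul_eq_zero.mp h2).resolve_left hfz

lemma kannappan_sine_sub_sigma_z₀ [CharZero R] (hσmul : ∀ x y : S, σ (x * y) = σ x * σ y)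
    (hσinv : ∀ x : S, σ (σ x) = x)
    (hfg : ∀ x y : S, f (x * σ y * z₀) = f x * g y - f y * g x)
    (hli : LinearIndependent R ![f, g]) (hgz : g z₀ = 0) (hfz : f z₀ ≠ 0) (x w : S) :
    g (x * σ z₀ * w) = g x * g w ∧ f (x * σ z₀ * w) = f x * g w - f w * g x := by
  have h := hli.pair_coeffs_eq_zero (a := g x * g w - g (x * σ z₀ * w))
    (b := f (x * σ z₀ * w) - (f x * g w - f w * g x)) fun v => by
      have h := kannappan_four_point hσmul hσinv hfg v x z₀ w
      rw [hfg v x, kannappan_g_mul_sigma_mul_z₀ hσmul hσinv hfg hgz hfz v x] at h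
      linear_combination h
  exact ⟨by linear_combination -h.1, by linear_combination h.2⟩

end Kannappan

/-- If `f, g` solve the Kannappan-sine subtraction law and are
linearly independent, then `g z₀ ≠ 0`. -/
theorem kannappan_sine_sub_g_z0_ne_zero
    {S : Type*} [Semigroup S] (z₀ : S) (σ : S → S)
    (hσmul : ∀ x y : S, σ (x * y) = σ x * σ y)
    (hσinv : ∀ x : S, σ (σ x) = x)
    (f g : S → ℂ)
    (hfg : ∀ x y : S, f (x * σ y * z₀) = f x * g y - f y * g x)
    (hind : ∀ a b : ℂ, (∀ x : S, a * f x + b * g x = 0) → a = 0 ∧ b = 0) :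
    g z₀ ≠ 0 := by
  have hli : LinearIndependent ℂ ![f, g] :=
    LinearIndependent.pair_iff.mpr fun a b h => hind a b fun x => by simpa using congrFun h x
  intro hgz
  by_cases hfz : f z₀ = 0
  · exact kannappan_false_of_apply_z₀_eq_zero hσmul hσinv hfg hli hgz hfz
  obtain ⟨u, hu⟩ : ∃ u, f u ≠ 0 := Function.ne_iff.mp (hli.ne_zero 0)
  have hmul := kannappan_sine_sub_sigma_z₀ hσmul hσinv hfg hli hgz hfz
  refine hli.ne_zero 1 (funext fun x => ?_)
  have h := sine_sub_mul_sq_eq_zero (σ z₀) (fun x w => (hmul x w).1) (fun x w => (hmul x w).2)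
    x u
  exact pow_eq_zero_iff two_ne_zero |>.mp ((mul_eq_zero.mp h).resolve_left hu)
end

section
/- Let f, g : S → ℂ be a solution of the Kannappan-sine subtraction law f(x σ(y) z₀) = f(x) g(y) − f(y) g(x) for all x, y ∈ S, such that f and g are linearly independent. If g(σ(z₀) z₀) = 0, then f(σ(z₀) z₀) ≠ 0. -/
/-!
Read the law as a determinant: if `f (x * σ c * z₀) = 0` for all `x`, then
`g c • f - f c • g = 0`, so independence makes `c` a common zero of `f` and `g`.
Since `σ (y * w) = σ y * σ w`, the law then spreads a common zero `w` to all of `S * w`.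
If `σ z₀ * z₀` were a common zero, `f` would vanish on `S * σ z₀ * z₀`, making `z₀` a common
zero; then `f` vanishes on `S * z₀`, so every point is a common zero, contradicting independence.
-/

theorem eq_zero_and_eq_zero_of_forall_mul_sub_mul_eq_zero {X R : Type*} [CommRing R]
    {f g : X → R} (hind : ∀ a b : R, (∀ x : X, a * f x + b * g x = 0) → a = 0 ∧ b = 0)
    {a b : R} (h : ∀ x, f x * b - a * g x = 0) : a = 0 ∧ b = 0 := by
  obtain ⟨hb, ha⟩ := hind b (-a) fun x => by linear_combination h x
  exact ⟨neg_eq_zero.mp ha, hb⟩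

section KannappanSineSub

variable {S R : Type*} [Semigroup S] [CommRing R] {z₀ : S} {σ : S → S} {f g : S → R}

theorem kannappan_common_zero_of_forall_eq_zero
    (hfg : ∀ x y : S, f (x * σ y * z₀) = f x * g y - f y * g x)
    (hind : ∀ a b : R, (∀ x : S, a * f x + b * g x = 0) → a = 0 ∧ b = 0)
    {c : S} (hc : ∀ x, f (x * σ c * z₀) = 0) : f c = 0 ∧ g c = 0 :=
  eq_zero_and_eq_zero_of_forall_mul_sub_mul_eq_zero hind fun x => hfg x c ▸ hc x

theorem kannappan_common_zero_mul (hσmul : ∀ x y : S, σ (x * y) = σ x * σ y)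
    (hfg : ∀ x y : S, f (x * σ y * z₀) = f x * g y - f y * g x)
    (hind : ∀ a b : R, (∀ x : S, a * f x + b * g x = 0) → a = 0 ∧ b = 0)
    {w : S} (hw : f w = 0 ∧ g w = 0) (y : S) : f (y * w) = 0 ∧ g (y * w) = 0 := by
  refine kannappan_common_zero_of_forall_eq_zero hfg hind fun x => ?_
  rw [hσmul, ← mul_assoc, hfg, hw.1, hw.2]
  ring

theorem kannappan_not_common_zero_z0 [Nontrivial R] (hσmul : ∀ x y : S, σ (x * y) = σ x * σ y)
    (hfg : ∀ x y : S, f (x * σ y * z₀) = f x * g y - f y * g x)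
    (hind : ∀ a b : R, (∀ x : S, a * f x + b * g x = 0) → a = 0 ∧ b = 0) :
    ¬(f z₀ = 0 ∧ g z₀ = 0) := by
  intro hz₀
  have hf : ∀ c, f c = 0 := fun c =>
    (kannappan_common_zero_of_forall_eq_zero hfg hind fun x =>
      (kannappan_common_zero_mul hσmul hfg hind hz₀ (x * σ c)).1).1
  exact one_ne_zero (hind 1 0 fun x => by simp [hf x]).1

end KannappanSineSub

theorem kannappan_sine_sub_f_sigmaz0z0_ne_zero_general
    {S : Type*} [Semigroup S] (z₀ : S) (σ : S → S)
    (hσmul : ∀ x y : S, σ (x * y) = σ x * σ y)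
    (f g : S → ℂ)
    (hfg : ∀ x y : S, f (x * σ y * z₀) = f x * g y - f y * g x)
    (hind : ∀ a b : ℂ, (∀ x : S, a * f x + b * g x = 0) → a = 0 ∧ b = 0)
    (hg0 : g (σ z₀ * z₀) = 0) :
    f (σ z₀ * z₀) ≠ 0 := by
  intro hf0
  refine kannappan_not_common_zero_z0 hσmul hfg hind
    (kannappan_common_zero_of_forall_eq_zero hfg hind fun x => ?_)
  rw [mul_assoc]
  exact (kannappan_common_zero_mul hσmul hfg hind ⟨hf0, hg0⟩ x).1

/-- If `f, g` solve the Kannappan-sine subtraction law, are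
linearly independent, and `g(σ(z₀)z₀) = 0`, then `f(σ(z₀)z₀) ≠ 0`. -/
theorem kannappan_sine_sub_f_sigmaz0z0_ne_zero
    {S : Type*} [Semigroup S] (z₀ : S) (σ : S → S)
    (hσmul : ∀ x y : S, σ (x * y) = σ x * σ y)
    (hσinv : ∀ x : S, σ (σ x) = x)
    (f g : S → ℂ)
    (hfg : ∀ x y : S, f (x * σ y * z₀) = f x * g y - f y * g x)
    (hind : ∀ a b : ℂ, (∀ x : S, a * f x + b * g x = 0) → a = 0 ∧ b = 0)
    (hg0 : g (σ z₀ * z₀) = 0) :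
    f (σ z₀ * z₀) ≠ 0 :=
  kannappan_sine_sub_f_sigmaz0z0_ne_zero_general z₀ σ hσmul f g hfg hind hg0
end

section
/- Let f, g : S → ℂ be a solution of the Kannappan-sine subtraction law f(x σ(y) z₀) = f(x) g(y) − f(y) g(x) for all x, y ∈ S, such that f and g are linearly independent and g(σ(z₀) z₀) = 0. Then f(σ(z₀) z₀) ≠ 0 and, setting γ := g(z₀) / f(σ(z₀) z₀), one has g(x σ(y)) = γ g(x) f(y) − γ f(x) g(y) for all x, y ∈ S. -/
/-!
Write `K x y = f x * g y - f y * g x`. Since `K x y = f (x * σ y * z₀)` depends only on `x * σ y`,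
`K (u * z₀) z₀ = K u (σ z₀ * z₀) = -f (σ z₀ * z₀) * g u` and `K (u * z₀) y = K u (σ z₀ * y)`.
Independence of `f` and `g` yields `y` with `K y z₀ ≠ 0`; so `f (σ z₀ * z₀) ≠ 0`, as otherwise the
first identity forces `K · z₀ = 0`, and the two identities form a solvable linear system giving
`f (u * z₀) = p * f u + q * g u`. Evaluating at `σ z₀ * z₀` and at `σ z₀` shows `p = 0` and
`f (σ z₀ * z₀) = -q * g z₀`, hence `g z₀ * f (u * z₀) = -f (σ z₀ * z₀) * g u`; at `u = x * σ y`
this is the claim.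
-/

namespace KannappanSine

variable {S : Type*} {f g : S → ℂ}

theorem eq_zero_of_forall_cross_eq_zero
    (hind : ∀ a b : ℂ, (∀ x : S, a * f x + b * g x = 0) → a = 0 ∧ b = 0) {y : S}
    (h : ∀ x, f x * g y - f y * g x = 0) : f y = 0 ∧ g y = 0 := by
  obtain ⟨hgy, hfy⟩ := hind (g y) (-f y) fun x => by linear_combination h x
  exact ⟨neg_eq_zero.mp hfy, hgy⟩

variable [Semigroup S] {σ : S → S} {z₀ : S}

theorem cross_congr (hfg : ∀ x y : S, f (x * σ y * z₀) = f x * g y - f y * g x)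
    {x y x' y' : S} (h : x * σ y = x' * σ y') :
    f x * g y - f y * g x = f x' * g y' - f y' * g x' := by
  rw [← hfg, ← hfg, h]

theorem cross_mul_right_eq (hσmul : ∀ x y : S, σ (x * y) = σ x * σ y)
    (hσinv : ∀ x : S, σ (σ x) = x)
    (hfg : ∀ x y : S, f (x * σ y * z₀) = f x * g y - f y * g x)
    (hg0 : g (σ z₀ * z₀) = 0) (u : S) :
    f (u * z₀) * g z₀ - f z₀ * g (u * z₀) = -(f (σ z₀ * z₀) * g u) := by
  have h := cross_congr hfg (x := u * z₀) (y := z₀) (x' := u) (y' := σ z₀ * z₀)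
    (by simp only [hσmul, hσinv, mul_assoc])
  rw [h, hg0]
  ring

theorem exists_cross_ne_zero (hσmul : ∀ x y : S, σ (x * y) = σ x * σ y)
    (hσinv : ∀ x : S, σ (σ x) = x)
    (hfg : ∀ x y : S, f (x * σ y * z₀) = f x * g y - f y * g x)
    (hind : ∀ a b : ℂ, (∀ x : S, a * f x + b * g x = 0) → a = 0 ∧ b = 0) :
    ∃ u, f u * g z₀ - f z₀ * g u ≠ 0 := by
  by_contra! h
  have hK : ∀ x y, f x * g y - f y * g x = 0 := fun x y => by
    rw [← hfg]
    refine (eq_zero_of_forall_cross_eq_zero hind fun w => ?_).1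
    rw [cross_congr hfg (x' := w * σ x * y) (y' := z₀) (by simp only [hσmul, hσinv, mul_assoc])]
    exact h _
  have hf : ∀ y, f y = 0 := fun y => (eq_zero_of_forall_cross_eq_zero hind (hK · y)).1
  exact one_ne_zero (hind 1 0 fun x => by simp [hf x]).1

theorem f_sigma_mul_ne_zero (hσmul : ∀ x y : S, σ (x * y) = σ x * σ y)
    (hσinv : ∀ x : S, σ (σ x) = x)
    (hfg : ∀ x y : S, f (x * σ y * z₀) = f x * g y - f y * g x)
    (hind : ∀ a b : ℂ, (∀ x : S, a * f x + b * g x = 0) → a = 0 ∧ b = 0)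
    (hg0 : g (σ z₀ * z₀) = 0) : f (σ z₀ * z₀) ≠ 0 := by
  intro he
  obtain ⟨u, hu⟩ := exists_cross_ne_zero hσmul hσinv hfg hind
  refine hu ?_
  rw [← hfg]
  refine (eq_zero_of_forall_cross_eq_zero hind fun x => ?_).1
  rw [cross_congr hfg (x' := x * σ u * z₀) (y' := z₀) (by simp only [hσmul, hσinv, mul_assoc]),
    cross_mul_right_eq hσmul hσinv hfg hg0, he]
  ring

theorem exists_f_mul_right_eq (hσmul : ∀ x y : S, σ (x * y) = σ x * σ y)
    (hσinv : ∀ x : S, σ (σ x) = x)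
    (hfg : ∀ x y : S, f (x * σ y * z₀) = f x * g y - f y * g x)
    (hind : ∀ a b : ℂ, (∀ x : S, a * f x + b * g x = 0) → a = 0 ∧ b = 0)
    (hg0 : g (σ z₀ * z₀) = 0) :
    ∃ p q : ℂ, ∀ u, f (u * z₀) = p * f u + q * g u := by
  obtain ⟨y, hy⟩ := exists_cross_ne_zero hσmul hσinv hfg hind
  refine ⟨-(f z₀ * g (σ z₀ * y)) / (f y * g z₀ - f z₀ * g y),
    (f z₀ * f (σ z₀ * y) - f y * f (σ z₀ * z₀)) / (f y * g z₀ - f z₀ * g y), fun u => ?_⟩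
  have h₁ := cross_mul_right_eq hσmul hσinv hfg hg0 u
  have h₂ := cross_congr hfg (x := u * z₀) (y := y) (x' := u) (y' := σ z₀ * y)
    (by simp only [hσmul, hσinv, mul_assoc])
  field_simp
  linear_combination f y * h₁ - f z₀ * h₂

theorem g_mul_f_mul_right_eq (hσmul : ∀ x y : S, σ (x * y) = σ x * σ y)
    (hσinv : ∀ x : S, σ (σ x) = x)
    (hfg : ∀ x y : S, f (x * σ y * z₀) = f x * g y - f y * g x)
    (hind : ∀ a b : ℂ, (∀ x : S, a * f x + b * g x = 0) → a = 0 ∧ b = 0)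
    (hg0 : g (σ z₀ * z₀) = 0) (u : S) :
    g z₀ * f (u * z₀) = -(f (σ z₀ * z₀) * g u) := by
  have he := f_sigma_mul_ne_zero hσmul hσinv hfg hind hg0
  obtain ⟨p, q, hpq⟩ := exists_f_mul_right_eq hσmul hσinv hfg hind hg0
  have hez : f (σ z₀ * z₀ * z₀) = 0 := by
    have h := hfg (σ z₀) (σ z₀)
    rw [hσinv] at h
    linear_combination h
  have hp : p = 0 := by
    have h := hpq (σ z₀ * z₀)
    rw [hez, hg0] at h
    simpa [he] using h.symm
  have hgσ : g (σ z₀) = -g z₀ := by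
    have h := cross_mul_right_eq hσmul hσinv hfg hg0 (σ z₀)
    rw [hg0] at h
    exact mul_left_cancel₀ he (by linear_combination h)
  have hq : f (σ z₀ * z₀) = -(q * g z₀) := by rw [hpq, hp, hgσ]; ring
  rw [hpq, hp, hq]
  ring

end KannappanSine

open KannappanSine in
/-- Case 1 of the main theorem. If `f, g` solve the Kannappan-sine
subtraction law, are linearly independent and `g(σ(z₀)z₀) = 0`, then
`f(σ(z₀)z₀) ≠ 0` and with `γ := g(z₀)/f(σ(z₀)z₀)` one has
`g(xσ(y)) = γ g(x) f(y) − γ f(x) g(y)`. -/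
theorem kannappan_sine_sub_case1
    {S : Type*} [Semigroup S] (z₀ : S) (σ : S → S)
    (hσmul : ∀ x y : S, σ (x * y) = σ x * σ y)
    (hσinv : ∀ x : S, σ (σ x) = x)
    (f g : S → ℂ)
    (hfg : ∀ x y : S, f (x * σ y * z₀) = f x * g y - f y * g x)
    (hind : ∀ a b : ℂ, (∀ x : S, a * f x + b * g x = 0) → a = 0 ∧ b = 0)
    (hg0 : g (σ z₀ * z₀) = 0) :
    f (σ z₀ * z₀) ≠ 0 ∧
      ∀ x y : S,
        g (x * σ y) =
          g z₀ / f (σ z₀ * z₀) * g x * f y -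
            g z₀ / f (σ z₀ * z₀) * f x * g y := by
  have he := f_sigma_mul_ne_zero hσmul hσinv hfg hind hg0
  refine ⟨he, fun x y => ?_⟩
  have h := g_mul_f_mul_right_eq hσmul hσinv hfg hind hg0 (x * σ y)
  rw [hfg] at h
  field_simp
  linear_combination h
end

section
/- Let f, g : S → ℂ be a solution of the Kannappan-sine subtraction law f(x σ(y) z₀) = f(x) g(y) − f(y) g(x) for all x, y ∈ S, such that f and g are linearly independent, g(σ(z₀) z₀) ≠ 0, and f(σ(z₀) z₀) = 0. Then, setting β := g(z₀) / g(σ(z₀) z₀), one has f(x σ(y)) = β f(x) g(y) − β f(y) g(x) for all x, y ∈ S. -/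
/-!
Write `p = σ(z₀) z₀`. Expanding `f(a σ(b) z₀ σ(w) z₀)` in two ways and using the linear independence
of `f` and `g` shows that whenever `f w = 0`, right multiplication by `σ(z₀) w` acts on `g` by the
factor `g w` and on `f` by the same factor. Applied to `w = p` this gives `g(z₀ z₀) = g p`,
and then `f z₀ = 0` by one more use of independence; applied to `w = z₀` it gives `g(b p) = g(z₀) g(b)`
and `f(b p) = g(z₀) f(b)`. Finally `f(a σ(b) σ(p) z₀)`, computed in two ways, yields
`g(p) f(a σ(b)) = g(z₀) (f(a) g(b) - f(b) g(a))`.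
-/

namespace KannappanSineSub

variable {S : Type*} [Semigroup S] {z₀ : S} {σ : S → S} {f g : S → ℂ}

/-- The two expansions of `f (a σ(b) z₀ σ(w) z₀)`, as `f ((a σ(b) z₀) σ(w) z₀)` and as
`f (a σ(b σ(z₀) w) z₀)`. -/
theorem f_mul_g_eq (hσmul : ∀ x y : S, σ (x * y) = σ x * σ y)
    (hσinv : ∀ x : S, σ (σ x) = x)
    (hfg : ∀ x y : S, f (x * σ y * z₀) = f x * g y - f y * g x) (a b w : S) :
    f w * g (a * σ b * z₀) =
      f a * (g b * g w - g (b * σ z₀ * w)) + g a * (f (b * σ z₀ * w) - f b * g w) := by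
  have outer := hfg (a * σ b * z₀) w
  have inner := hfg a (b * σ z₀ * w)
  rw [hfg a b] at outer
  simp only [hσmul, hσinv, ← mul_assoc] at inner
  linear_combination outer - inner

theorem mul_sigma_mul_of_f_eq_zero (hσmul : ∀ x y : S, σ (x * y) = σ x * σ y)
    (hσinv : ∀ x : S, σ (σ x) = x)
    (hfg : ∀ x y : S, f (x * σ y * z₀) = f x * g y - f y * g x)
    (hind : ∀ a b : ℂ, (∀ x : S, a * f x + b * g x = 0) → a = 0 ∧ b = 0)
    {w : S} (hw : f w = 0) (b : S) :
    g (b * σ z₀ * w) = g b * g w ∧ f (b * σ z₀ * w) = f b * g w := by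
  obtain ⟨hg, hf⟩ := hind (g b * g w - g (b * σ z₀ * w)) (f (b * σ z₀ * w) - f b * g w) fun a ↦ by
    linear_combination -(f_mul_g_eq hσmul hσinv hfg a b w) + g (a * σ b * z₀) * hw
  exact ⟨(sub_eq_zero.mp hg).symm, sub_eq_zero.mp hf⟩

theorem g_mul_self_eq (hσmul : ∀ x y : S, σ (x * y) = σ x * σ y)
    (hσinv : ∀ x : S, σ (σ x) = x)
    (hfg : ∀ x y : S, f (x * σ y * z₀) = f x * g y - f y * g x)
    (hind : ∀ a b : ℂ, (∀ x : S, a * f x + b * g x = 0) → a = 0 ∧ b = 0)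
    (hf0 : f (σ z₀ * z₀) = 0) :
    g (z₀ * z₀) = g (σ z₀ * z₀) := by
  have h := hind (g (σ z₀ * z₀) - g (z₀ * z₀)) (f (z₀ * z₀)) fun b ↦ by
    have hp := (mul_sigma_mul_of_f_eq_zero hσmul hσinv hfg hind hf0 b).2
    have hsq := hfg b (z₀ * z₀)
    simp only [hσmul, ← mul_assoc] at hp hsq
    linear_combination hsq - hp
  exact (sub_eq_zero.mp h.1).symm

theorem f_eq_zero (hσmul : ∀ x y : S, σ (x * y) = σ x * σ y)
    (hσinv : ∀ x : S, σ (σ x) = x)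
    (hfg : ∀ x y : S, f (x * σ y * z₀) = f x * g y - f y * g x)
    (hind : ∀ a b : ℂ, (∀ x : S, a * f x + b * g x = 0) → a = 0 ∧ b = 0)
    (hg0 : g (σ z₀ * z₀) ≠ 0) (hf0 : f (σ z₀ * z₀) = 0) :
    f z₀ = 0 := by
  have hg_sq := g_mul_self_eq hσmul hσinv hfg hind hf0
  have key : ∀ a : S, (g (z₀ * z₀) * g z₀ - g (z₀ * z₀ * σ z₀ * z₀)) * f a
      + (-2 * f z₀ * g (σ z₀ * z₀)) * g a = 0 := fun a ↦ by
    have expand := f_mul_g_eq hσmul hσinv hfg a (z₀ * z₀) z₀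
    have hp := (mul_sigma_mul_of_f_eq_zero hσmul hσinv hfg hind hf0 a).1
    have hsq := hfg (z₀ * z₀) z₀
    simp only [hσmul, ← mul_assoc] at expand hp
    rw [hp] at expand
    linear_combination -expand - g a * hsq + f z₀ * g a * hg_sq
  have h := (hind _ _ key).2
  simpa [hg0] using h

/-- The two expansions of `f (a σ(b) σ(σ(z₀) z₀) z₀)`. -/
theorem g_mul_f_mul_sigma (hσmul : ∀ x y : S, σ (x * y) = σ x * σ y)
    (hfg : ∀ x y : S, f (x * σ y * z₀) = f x * g y - f y * g x)
    (hf0 : f (σ z₀ * z₀) = 0) (a b : S) :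
    g (σ z₀ * z₀) * f (a * σ b) =
      f a * g (b * (σ z₀ * z₀)) - f (b * (σ z₀ * z₀)) * g a := by
  have outer := hfg (a * σ b) (σ z₀ * z₀)
  have inner := hfg a (b * (σ z₀ * z₀))
  rw [hf0] at outer
  rw [hσmul, ← mul_assoc] at inner
  linear_combination inner - outer

end KannappanSineSub

/-- Subcase 2.1 of the main theorem. If `f, g` solve the
Kannappan-sine subtraction law, are linearly independent, `g(σ(z₀)z₀) ≠ 0` and
`f(σ(z₀)z₀) = 0`, then with `β := g(z₀)/g(σ(z₀)z₀)` one has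
`f(xσ(y)) = β f(x) g(y) − β f(y) g(x)`. -/
theorem kannappan_sine_sub_subcase21
    {S : Type*} [Semigroup S] (z₀ : S) (σ : S → S)
    (hσmul : ∀ x y : S, σ (x * y) = σ x * σ y)
    (hσinv : ∀ x : S, σ (σ x) = x)
    (f g : S → ℂ)
    (hfg : ∀ x y : S, f (x * σ y * z₀) = f x * g y - f y * g x)
    (hind : ∀ a b : ℂ, (∀ x : S, a * f x + b * g x = 0) → a = 0 ∧ b = 0)
    (hg0 : g (σ z₀ * z₀) ≠ 0) (hf0 : f (σ z₀ * z₀) = 0) :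
    ∀ x y : S,
      f (x * σ y) =
        g z₀ / g (σ z₀ * z₀) * f x * g y -
          g z₀ / g (σ z₀ * z₀) * f y * g x := by
  intro x y
  have hfz₀ := KannappanSineSub.f_eq_zero hσmul hσinv hfg hind hg0 hf0
  obtain ⟨hg, hf⟩ :=
    KannappanSineSub.mul_sigma_mul_of_f_eq_zero hσmul hσinv hfg hind hfz₀ y
  have h := KannappanSineSub.g_mul_f_mul_sigma hσmul hfg hf0 x y
  rw [← mul_assoc, hg, hf] at h
  field_simp
  linear_combination h
end

section
/- Let f, g : S → ℂ be a solution of the Kannappan-sine subtraction law f(x σ(y) z₀) = f(x) g(y) − f(y) g(x) for all x, y ∈ S, such that f and g are linearly independent and g(σ(z₀) z₀) ≠ 0. Set δ := g(z₀) / g(σ(z₀) z₀) and α := f(σ(z₀) z₀) / g(σ(z₀) z₀), and let F := f − α g. Then F(x σ(y)) = δ F(x) g(y) − δ F(y) g(x) for all x, y ∈ S. -/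
/-!
Write `T_y x = x σ(y) z₀`; the law says `f ∘ T_y = g(y) f - f(y) g`, and `T_z ∘ T_y = T_{y σ(z₀) z}`.
Expanding `f ∘ T_z ∘ T_y` in two ways shows that `f(z) (g ∘ T_y)` lies in the span of `f` and `g`.
If `f(z₀) ≠ 0` this gives `g ∘ T_y = a(y) f - g(y) g` for a function `a`, so each `T_y` acts on
`span {f, g}` by a trace-free matrix; since the product `T_z ∘ T_y` is again of this form, comparing
coefficients yields `a(z) f(y) + f(z) a(y) = 2 g(y) g(z)`. Then `(g(w) f - f(w) g)² = 0` for every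
`w`, contradicting independence. Hence `f(z₀) = 0`, which makes `y ↦ g(y σ(z₀) z₀)` equal to
`g(z₀) g`, and the law at `(x σ(y), σ(z₀) z₀)` becomes the claimed identity for `F`.
-/

lemma LinearIndependent.eq_of_pair_apply {X : Type*} {f g : X → ℂ}
    (h : LinearIndependent ℂ ![f, g]) {s t s' t' : ℂ}
    (h' : ∀ x, s * f x + t * g x = s' * f x + t' * g x) : s = s' ∧ t = t' :=
  h.eq_of_pair (funext fun x => by simpa using h' x)

theorem not_linearIndependent_of_polarization {X : Type*} {f g a : X → ℂ}
    (h : ∀ y z, a z * f y + f z * a y = 2 * g y * g z) : ¬ LinearIndependent ℂ ![f, g] := by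
  intro hli
  have hsq : ∀ w y, (g w * f y - f w * g y) ^ 2 = 0 := fun w y => by
    linear_combination -(f y) ^ 2 / 2 * h w w - (f w) ^ 2 / 2 * h y y + f w * f y * h y w
  have hf : f = 0 := funext fun w =>
    neg_eq_zero.mp (hli.eq_of_pair_apply (s := g w) (t := -f w) (s' := 0) (t' := 0) fun y => by
      linear_combination pow_eq_zero_iff two_ne_zero |>.mp (hsq w y)).2
  exact hli.ne_zero 0 hf

namespace KannappanSine

variable {S : Type*} [Semigroup S] {σ : S → S} {z₀ : S} {f g : S → ℂ}

def IsSolution (σ : S → S) (z₀ : S) (f g : S → ℂ) : Prop :=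
  ∀ x y : S, f (x * σ y * z₀) = f x * g y - f y * g x

lemma mul_map_mul_mul_map_mul (hσmul : ∀ x y : S, σ (x * y) = σ x * σ y)
    (hσinv : ∀ x : S, σ (σ x) = x) (x y z : S) :
    x * σ y * z₀ * σ z * z₀ = x * σ (y * σ z₀ * z) * z₀ := by
  simp only [hσmul, hσinv, mul_assoc]

namespace IsSolution

lemma f_mul_g_mul_map_mul (hσmul : ∀ x y : S, σ (x * y) = σ x * σ y)
    (hσinv : ∀ x : S, σ (σ x) = x) (hfg : IsSolution σ z₀ f g) (x y z : S) :
    f z * g (x * σ y * z₀) =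
      f x * (g y * g z - g (y * σ z₀ * z)) + g x * (f (y * σ z₀ * z) - f y * g z) := by
  have h := hfg (x * σ y * z₀) z
  rw [mul_map_mul_mul_map_mul hσmul hσinv] at h
  linear_combination h - hfg x (y * σ z₀ * z) + g z * hfg x y

theorem f_z₀_eq_zero (hσmul : ∀ x y : S, σ (x * y) = σ x * σ y)
    (hσinv : ∀ x : S, σ (σ x) = x) (hfg : IsSolution σ z₀ f g)
    (hli : LinearIndependent ℂ ![f, g]) : f z₀ = 0 := by
  by_contra hz
  have hG := hfg.f_mul_g_mul_map_mul hσmul hσinv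
  obtain ⟨a, ha⟩ : ∃ a : S → ℂ, ∀ y, f z₀ * a y = g y * g z₀ - g (y * σ z₀ * z₀) :=
    ⟨fun y => (g y * g z₀ - g (y * σ z₀ * z₀)) / f z₀, fun y => mul_div_cancel₀ _ hz⟩
  have hgT : ∀ x y, g (x * σ y * z₀) = a y * f x - g y * g x := fun x y =>
    mul_left_cancel₀ hz (by linear_combination hG x y z₀ + g x * hfg y z₀ - f x * ha y)
  refine not_linearIndependent_of_polarization (a := a) (fun y z => ?_) hli
  have hf : f z * a y = g y * g z - g (y * σ z₀ * z) :=
    (hli.eq_of_pair_apply (t := -f z * g y) (t' := f (y * σ z₀ * z) - f y * g z) fun x => by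
      linear_combination hG x y z - f z * hgT x y).1
  have hg : g z * g y - a z * f y = -g (y * σ z₀ * z) :=
    (hli.eq_of_pair_apply (s := a z * g y - g z * a y) (s' := a (y * σ z₀ * z)) fun x => by
      have h := hgT (x * σ y * z₀) z
      rw [mul_map_mul_mul_map_mul hσmul hσinv, hgT, hfg, hgT] at h
      linear_combination -h).2
  linear_combination hf - hg

theorem g_mul_map_z₀_mul (hσmul : ∀ x y : S, σ (x * y) = σ x * σ y)
    (hσinv : ∀ x : S, σ (σ x) = x) (hfg : IsSolution σ z₀ f g)
    (hli : LinearIndependent ℂ ![f, g]) (y : S) : g (y * σ z₀ * z₀) = g y * g z₀ := by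
  have hz := hfg.f_z₀_eq_zero hσmul hσinv hli
  have h := hli.eq_of_pair_apply (s := g y * g z₀ - g (y * σ z₀ * z₀)) (t := 0) (s' := 0)
      (t' := 0) fun x => by
    linear_combination -hfg.f_mul_g_mul_map_mul hσmul hσinv x y z₀ - g x * hfg y z₀
      + (g (x * σ y * z₀) + g x * g y) * hz
  linear_combination -h.1

end IsSolution

end KannappanSine

/-- Case 2 of the main theorem. If `f, g` solve the
Kannappan-sine subtraction law, are linearly independent and `g(σ(z₀)z₀) ≠ 0`,
then with `δ := g(z₀)/g(σ(z₀)z₀)`, `α := f(σ(z₀)z₀)/g(σ(z₀)z₀)` and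
`F := f − α g`, one has `F(xσ(y)) = δ F(x) g(y) − δ F(y) g(x)`. -/
theorem kannappan_sine_sub_case2
    {S : Type*} [Semigroup S] (z₀ : S) (σ : S → S)
    (hσmul : ∀ x y : S, σ (x * y) = σ x * σ y)
    (hσinv : ∀ x : S, σ (σ x) = x)
    (f g : S → ℂ)
    (hfg : ∀ x y : S, f (x * σ y * z₀) = f x * g y - f y * g x)
    (hind : ∀ a b : ℂ, (∀ x : S, a * f x + b * g x = 0) → a = 0 ∧ b = 0)
    (hg0 : g (σ z₀ * z₀) ≠ 0)
    (δ α : ℂ) (hδ : δ = g z₀ / g (σ z₀ * z₀))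
    (hα : α = f (σ z₀ * z₀) / g (σ z₀ * z₀))
    (F : S → ℂ) (hF : ∀ x : S, F x = f x - α * g x) :
    ∀ x y : S, F (x * σ y) = δ * F x * g y - δ * F y * g x := by
  have hsol : KannappanSine.IsSolution σ z₀ f g := hfg
  have hli : LinearIndependent ℂ ![f, g] := LinearIndependent.pair_iff.mpr fun s t h =>
    hind s t fun x => by simpa using congrFun h x
  have hz := hsol.f_z₀_eq_zero hσmul hσinv hli
  intro x y
  have hshift := hfg (x * σ y) (σ z₀ * z₀)
  rw [hσmul, hσinv, ← mul_assoc, KannappanSine.mul_map_mul_mul_map_mul hσmul hσinv, hfg,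
    hsol.g_mul_map_z₀_mul hσmul hσinv hli, hfg, hz] at hshift
  have hα' : α * g (σ z₀ * z₀) = f (σ z₀ * z₀) := by rw [hα, div_mul_cancel₀ _ hg0]
  have hδ' : δ * g (σ z₀ * z₀) = g z₀ := by rw [hδ, div_mul_cancel₀ _ hg0]
  rw [hF, hF, hF]
  apply mul_left_cancel₀ hg0
  linear_combination -hshift - g (x * σ y) * hα' - (f x * g y - f y * g x) * hδ'
end

section
/- Let γ, b ∈ ℂ with γ ≠ 0 and b ≠ 0, let c ∈ ℂ with c ≠ 1 and c ≠ −1, and let χ : S → ℂ be an exponential function with χ(z₀) = −2b/(1+c) and (χ∘σ)(z₀) = 2b/(1−c). Define f := (χ + χ∘σ)/(2γ) + c (χ − χ∘σ)/(2γ) and g := b (χ − χ∘σ). Then f(x σ(y) z₀) = f(x) g(y) − f(y) g(x) for all x, y ∈ S. -/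
/-!
Write `f = ((1 + c) χ + (1 - c) (χ ∘ σ)) / (2γ)`. The values prescribed at `z₀` are exactly the
ones that cancel the factors `1 ± c` at `x σ(y) z₀`, so that
`f (x σ(y) z₀) = b (χ(σ x) χ(y) - χ(x) χ(σ y)) / γ`; expanding `f(x) g(y) - f(y) g(x)` gives the
same antisymmetric expression, the `c`-terms cancelling.
-/

section Family3

variable {S : Type*} {σ : S → S} {χ f g : S → ℂ} {γ b c : ℂ}

theorem family3_mul_sub_mul_swap
    (hf : ∀ x : S, f x = (χ x + χ (σ x)) / (2 * γ) + c * (χ x - χ (σ x)) / (2 * γ))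
    (hg : ∀ x : S, g x = b * (χ x - χ (σ x))) (x y : S) :
    f x * g y - f y * g x = b * (χ (σ x) * χ y - χ x * χ (σ y)) / γ := by
  rw [hf, hf, hg, hg]
  ring

theorem family3_apply_mul_sigma_mul [Semigroup S] {z₀ : S}
    (hσmul : ∀ x y : S, σ (x * y) = σ x * σ y) (hσinv : ∀ x : S, σ (σ x) = x)
    (hc1 : c ≠ 1) (hc2 : c ≠ -1) (hχmul : ∀ x y : S, χ (x * y) = χ x * χ y)
    (hz : χ z₀ = -2 * b / (1 + c)) (hz' : χ (σ z₀) = 2 * b / (1 - c))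
    (hf : ∀ x : S, f x = (χ x + χ (σ x)) / (2 * γ) + c * (χ x - χ (σ x)) / (2 * γ))
    (x y : S) :
    f (x * σ y * z₀) = b * (χ (σ x) * χ y - χ x * χ (σ y)) / γ := by
  have hz₁ : (1 + c) * χ z₀ = -2 * b := by
    rw [hz]
    exact mul_div_cancel₀ _ fun h => hc2 (by linear_combination h)
  have hz₂ : (1 - c) * χ (σ z₀) = 2 * b := by
    rw [hz']
    exact mul_div_cancel₀ _ (sub_ne_zero.mpr hc1.symm)
  rw [hf, hσmul, hσmul, hσinv, hχmul, hχmul, hχmul, hχmul]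
  linear_combination (χ x * χ (σ y) / (2 * γ)) * hz₁ + (χ (σ x) * χ y / (2 * γ)) * hz₂

end Family3

theorem kannappan_sine_sub_family3_general
    {S : Type*} [Semigroup S] (z₀ : S) (σ : S → S)
    (hσmul : ∀ x y : S, σ (x * y) = σ x * σ y)
    (hσinv : ∀ x : S, σ (σ x) = x)
    (γ b c : ℂ) (hc1 : c ≠ 1) (hc2 : c ≠ -1)
    (χ : S → ℂ) (hχmul : ∀ x y : S, χ (x * y) = χ x * χ y)
    (hz : χ z₀ = -2 * b / (1 + c)) (hz' : χ (σ z₀) = 2 * b / (1 - c))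
    (f g : S → ℂ)
    (hf : ∀ x : S, f x = (χ x + χ (σ x)) / (2 * γ) + c * (χ x - χ (σ x)) / (2 * γ))
    (hg : ∀ x : S, g x = b * (χ x - χ (σ x))) :
    ∀ x y : S, f (x * σ y * z₀) = f x * g y - f y * g x := fun x y => by
  rw [family3_apply_mul_sigma_mul hσmul hσinv hc1 hc2 hχmul hz hz' hf,
    family3_mul_sub_mul_swap hf hg]

/-- Solution family (3) of the main theorem solves the
Kannappan-sine subtraction law. -/
theorem kannappan_sine_sub_family3
    {S : Type*} [Semigroup S] (z₀ : S) (σ : S → S)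
    (hσmul : ∀ x y : S, σ (x * y) = σ x * σ y)
    (hσinv : ∀ x : S, σ (σ x) = x)
    (γ b c : ℂ) (hγ : γ ≠ 0) (hb : b ≠ 0) (hc1 : c ≠ 1) (hc2 : c ≠ -1)
    (χ : S → ℂ) (hχmul : ∀ x y : S, χ (x * y) = χ x * χ y) (hχ0 : χ ≠ 0)
    (hz : χ z₀ = -2 * b / (1 + c)) (hz' : χ (σ z₀) = 2 * b / (1 - c))
    (f g : S → ℂ)
    (hf : ∀ x : S, f x = (χ x + χ (σ x)) / (2 * γ) + c * (χ x - χ (σ x)) / (2 * γ))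
    (hg : ∀ x : S, g x = b * (χ x - χ (σ x))) :
    ∀ x y : S, f (x * σ y * z₀) = f x * g y - f y * g x :=
  kannappan_sine_sub_family3_general z₀ σ hσmul hσinv γ b c hc1 hc2 χ hχmul hz hz' f g hf hg
end

section
/- Let β, b ∈ ℂ with β ≠ 0 and b ≠ 0, let c ∈ ℂ, and let χ : S → ℂ be an exponential function with χ(z₀) = (χ∘σ)(z₀) = 1/β. Define f := b (χ − χ∘σ) and g := (χ + χ∘σ)/(2β) + c (χ − χ∘σ)/(2β). Then f(x σ(y) z₀) = f(x) g(y) − f(y) g(x) for all x, y ∈ S. -/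
theorem kannappan_sine_sub_family4_general
    {S : Type*} [Semigroup S] (z₀ : S) (σ : S → S)
    (hσmul : ∀ x y : S, σ (x * y) = σ x * σ y)
    (hσinv : ∀ x : S, σ (σ x) = x)
    (β b c : ℂ)
    (χ : S → ℂ) (hχmul : ∀ x y : S, χ (x * y) = χ x * χ y)
    (hz : χ z₀ = 1 / β) (hz' : χ (σ z₀) = 1 / β)
    (f g : S → ℂ)
    (hf : ∀ x : S, f x = b * (χ x - χ (σ x)))
    (hg : ∀ x : S, g x = (χ x + χ (σ x)) / (2 * β) + c * (χ x - χ (σ x)) / (2 * β)) :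
    ∀ x y : S, f (x * σ y * z₀) = f x * g y - f y * g x := by
  intro x y
  -- Both sides reduce to `b / β * (χ x * χ (σ y) - χ (σ x) * χ y)`; the `c`-terms cancel.
  simp only [hf, hg, hχmul, hσmul, hσinv, hz, hz']
  ring

/-- Solution family (4) of the main theorem solves the
Kannappan-sine subtraction law. -/
theorem kannappan_sine_sub_family4
    {S : Type*} [Semigroup S] (z₀ : S) (σ : S → S)
    (hσmul : ∀ x y : S, σ (x * y) = σ x * σ y)
    (hσinv : ∀ x : S, σ (σ x) = x)
    (β b c : ℂ) (hβ : β ≠ 0) (hb : b ≠ 0)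
    (χ : S → ℂ) (hχmul : ∀ x y : S, χ (x * y) = χ x * χ y) (hχ0 : χ ≠ 0)
    (hz : χ z₀ = 1 / β) (hz' : χ (σ z₀) = 1 / β)
    (f g : S → ℂ)
    (hf : ∀ x : S, f x = b * (χ x - χ (σ x)))
    (hg : ∀ x : S, g x = (χ x + χ (σ x)) / (2 * β) + c * (χ x - χ (σ x)) / (2 * β)) :
    ∀ x y : S, f (x * σ y * z₀) = f x * g y - f y * g x :=
  kannappan_sine_sub_family4_general z₀ σ hσmul hσinv β b c χ hχmul hz hz' f g hf hg
end

section
/- Let α, δ, b ∈ ℂ be nonzero, let c ∈ ℂ, and let χ : S → ℂ be an exponential function with χ(z₀) = 2b/(α(1+c) + 2bδ) and (χ∘σ)(z₀) = 2b/(α(c−1) + 2bδ), where α(1+c) + 2bδ ≠ 0 and α(c−1) + 2bδ ≠ 0. Define f := α (χ + χ∘σ)/(2δ) + (α c + 2bδ)(χ − χ∘σ)/(2δ) and g := (χ + χ∘σ)/(2δ) + c (χ − χ∘σ)/(2δ). Then f(x σ(y) z₀) = f(x) g(y) − f(y) g(x) for all x, y ∈ S. -/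
/-! Writing `χ^σ = χ ∘ σ`, both `f` and `g` are linear combinations of the exponentials `χ` and
`χ^σ`, so `f(x)g(y) - f(y)g(x)` is a multiple of `χ(x)χ^σ(y) - χ^σ(x)χ(y)`, with factor the
determinant `b/δ` of the coefficients. Since `σ` is an involutive automorphism,
`f(xσ(y)z₀)` is a combination of the same two products, and the prescribed values of `χ` and
`χ^σ` at `z₀` make its coefficients `b/δ` and `-b/δ`. -/

theorem sine_subtraction_of_eq_linear_combination {S R : Type*} [Semigroup S] [CommRing R]
    (z₀ : S) {σ : S → S} (hσmul : ∀ x y, σ (x * y) = σ x * σ y) (hσinv : ∀ x, σ (σ x) = x)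
    {χ : S → R} (hχmul : ∀ x y, χ (x * y) = χ x * χ y) {A B C D : R} {f g : S → R}
    (hf : ∀ x, f x = A * χ x + B * χ (σ x)) (hg : ∀ x, g x = C * χ x + D * χ (σ x))
    (hA : A * χ z₀ = A * D - B * C) (hB : B * χ (σ z₀) = B * C - A * D) (x y : S) :
    f (x * σ y * z₀) = f x * g y - f y * g x := by
  simp only [hf, hg, hσmul, hσinv, hχmul]
  linear_combination (χ x * χ (σ y)) * hA + (χ (σ x) * χ y) * hB

theorem kannappan_sine_sub_family5_general
    {S : Type*} [Semigroup S] (z₀ : S) (σ : S → S)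
    (hσmul : ∀ x y : S, σ (x * y) = σ x * σ y)
    (hσinv : ∀ x : S, σ (σ x) = x)
    (α δ b c : ℂ) (hδ : δ ≠ 0)
    (hden1 : α * (1 + c) + 2 * b * δ ≠ 0)
    (hden2 : α * (c - 1) + 2 * b * δ ≠ 0)
    (χ : S → ℂ) (hχmul : ∀ x y : S, χ (x * y) = χ x * χ y)
    (hz : χ z₀ = 2 * b / (α * (1 + c) + 2 * b * δ))
    (hz' : χ (σ z₀) = 2 * b / (α * (c - 1) + 2 * b * δ))
    (f g : S → ℂ)
    (hf : ∀ x : S, f x = α * (χ x + χ (σ x)) / (2 * δ) +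
      (α * c + 2 * b * δ) * (χ x - χ (σ x)) / (2 * δ))
    (hg : ∀ x : S, g x = (χ x + χ (σ x)) / (2 * δ) + c * (χ x - χ (σ x)) / (2 * δ)) :
    ∀ x y : S, f (x * σ y * z₀) = f x * g y - f y * g x := by
  refine sine_subtraction_of_eq_linear_combination z₀ hσmul hσinv hχmul
    (A := (α * (1 + c) + 2 * b * δ) / (2 * δ)) (B := -(α * (c - 1) + 2 * b * δ) / (2 * δ))
    (C := (1 + c) / (2 * δ)) (D := (1 - c) / (2 * δ)) (fun x => ?_) (fun x => ?_) ?_ ?_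
  · rw [hf]; ring
  · rw [hg]; ring
  · rw [hz]; field_simp; ring
  · rw [hz']; field_simp; ring

/-- Solution family (5) of the main theorem solves the
Kannappan-sine subtraction law. -/
theorem kannappan_sine_sub_family5
    {S : Type*} [Semigroup S] (z₀ : S) (σ : S → S)
    (hσmul : ∀ x y : S, σ (x * y) = σ x * σ y)
    (hσinv : ∀ x : S, σ (σ x) = x)
    (α δ b c : ℂ) (hα : α ≠ 0) (hδ : δ ≠ 0) (hb : b ≠ 0)
    (hden1 : α * (1 + c) + 2 * b * δ ≠ 0)
    (hden2 : α * (c - 1) + 2 * b * δ ≠ 0)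
    (χ : S → ℂ) (hχmul : ∀ x y : S, χ (x * y) = χ x * χ y) (hχ0 : χ ≠ 0)
    (hz : χ z₀ = 2 * b / (α * (1 + c) + 2 * b * δ))
    (hz' : χ (σ z₀) = 2 * b / (α * (c - 1) + 2 * b * δ))
    (f g : S → ℂ)
    (hf : ∀ x : S, f x = α * (χ x + χ (σ x)) / (2 * δ) +
      (α * c + 2 * b * δ) * (χ x - χ (σ x)) / (2 * δ))
    (hg : ∀ x : S, g x = (χ x + χ (σ x)) / (2 * δ) + c * (χ x - χ (σ x)) / (2 * δ)) :
    ∀ x y : S, f (x * σ y * z₀) = f x * g y - f y * g x :=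
  kannappan_sine_sub_family5_general z₀ σ hσmul hσinv α δ b c hδ hden1 hden2 χ hχmul hz hz' f g hf
    hg
end

section
/- Let γ, c ∈ ℂ be nonzero, let χ : S → ℂ be an exponential function with χ(x) ≠ 0 for every x ∈ S and χ∘σ = χ, and let A : S → ℂ be an additive function (A(xy) = A(x) + A(y) for all x, y ∈ S) with A∘σ = −A and χ(z₀) = A(z₀) = −1/c. Define f := γ(χ + c·Aχ) and g := Aχ, where (Aχ)(x) := A(x)χ(x). Then f(x σ(y) z₀) = f(x) g(y) − f(y) g(x) for all x, y ∈ S. -/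
/- Since `c · A(z₀) = -1`, the constant term of `1 + c · A(x σ(y) z₀)` cancels, and both sides
reduce to `γ χ(x) χ(y) (A y - A x)`. -/

theorem kannappan_sine_sub_family6_general
    {S : Type*} [Semigroup S] (z₀ : S) (σ : S → S)
    (γ c : ℂ) (hc : c ≠ 0)
    (χ : S → ℂ) (hχmul : ∀ x y : S, χ (x * y) = χ x * χ y)
    (hχσ : ∀ x : S, χ (σ x) = χ x)
    (A : S → ℂ) (hA : ∀ x y : S, A (x * y) = A x + A y)
    (hAσ : ∀ x : S, A (σ x) = -A x)
    (hχz : χ z₀ = -1 / c) (hAz : A z₀ = -1 / c)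
    (f g : S → ℂ)
    (hf : ∀ x : S, f x = γ * (χ x + c * (A x * χ x)))
    (hg : ∀ x : S, g x = A x * χ x) :
    ∀ x y : S, f (x * σ y * z₀) = f x * g y - f y * g x := by
  intro x y
  have hχ_prod : χ (x * σ y * z₀) = χ x * χ y * (-1 / c) := by
    rw [hχmul, hχmul, hχσ, hχz]
  have hA_prod : A (x * σ y * z₀) = A x - A y - 1 / c := by
    rw [hA, hA, hAσ, hAz]
    ring
  rw [hf, hf, hf, hg, hg, hχ_prod, hA_prod]
  field_simp
  ring

/-- Solution family (6) of the main theorem (with `I_χ = ∅`, so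
`Ψ_{Aχ,ρ} = Aχ`) solves the Kannappan-sine subtraction law. -/
theorem kannappan_sine_sub_family6
    {S : Type*} [Semigroup S] (z₀ : S) (σ : S → S)
    (hσmul : ∀ x y : S, σ (x * y) = σ x * σ y)
    (hσinv : ∀ x : S, σ (σ x) = x)
    (γ c : ℂ) (hγ : γ ≠ 0) (hc : c ≠ 0)
    (χ : S → ℂ) (hχmul : ∀ x y : S, χ (x * y) = χ x * χ y)
    (hχne : ∀ x : S, χ x ≠ 0)
    (hχσ : ∀ x : S, χ (σ x) = χ x)
    (A : S → ℂ) (hA : ∀ x y : S, A (x * y) = A x + A y)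
    (hAσ : ∀ x : S, A (σ x) = -A x)
    (hχz : χ z₀ = -1 / c) (hAz : A z₀ = -1 / c)
    (f g : S → ℂ)
    (hf : ∀ x : S, f x = γ * (χ x + c * (A x * χ x)))
    (hg : ∀ x : S, g x = A x * χ x) :
    ∀ x y : S, f (x * σ y * z₀) = f x * g y - f y * g x :=
  kannappan_sine_sub_family6_general z₀ σ γ c hc χ hχmul hχσ A hA hAσ hχz hAz f g hf hg
end
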